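/- arXiv:1402.0433 — 7 statements merged into one kernel-verified Lean document; each statement's English description precedes it below -/
import Mathlib

section
/- For all nonnegative integers $n$ and $d$ with $n \ge d+1$, $\sum_{i} \binom{2n}{2i+1}\binom{i}{n-d-1} = 2^{2d+1}\binom{n+d}{2d+1}$. -/
/-!
Write `S(N, m) = ∑ᵢ C(N, 2i+1) C(i, m)`. Pascal's rule, applied once to `C(N+2, 2i+1)` (through the
companion sum over even indices) and once to `C(i+1, m+1)`, gives
`S(N+2, m+1) = 2 S(N+1, m+1) + S(N, m)`, which is also the recurrence of `2^k C(m+k, k)` along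
`N = 2m+1+k`. Together with `S(N+1, 0) = 2^N` and `S(2m+1, m) = 1` this yields
`S(2m+1+k, m) = 2^k C(m+k, k)`; the theorem is the case `N = 2n`, `m = n-d-1`, `k = 2d+1`.
-/

open Finset

def oddChooseSum (N m : ℕ) : ℕ := ∑ i ∈ range (N + 1), N.choose (2 * i + 1) * i.choose m

def evenChooseSum (N m : ℕ) : ℕ := ∑ i ∈ range (N + 1), N.choose (2 * i) * i.choose m

theorem sum_range_eq_oddChooseSum {N M : ℕ} (m : ℕ) (h : N ≤ 2 * M) :
    ∑ i ∈ range M, N.choose (2 * i + 1) * i.choose m = oddChooseSum N m := by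
  have hvanish : ∀ i ≥ (N + 1) / 2, N.choose (2 * i + 1) * i.choose m = 0 := fun i hi => by
    rw [Nat.choose_eq_zero_of_lt (by omega), zero_mul]
  rw [oddChooseSum, eventually_constant_sum hvanish (by omega),
    eventually_constant_sum hvanish (n := N + 1) (by omega)]

theorem sum_range_eq_evenChooseSum {N M : ℕ} (m : ℕ) (h : N < 2 * M) :
    ∑ i ∈ range M, N.choose (2 * i) * i.choose m = evenChooseSum N m := by
  have hvanish : ∀ i ≥ N / 2 + 1, N.choose (2 * i) * i.choose m = 0 := fun i hi => by
    rw [Nat.choose_eq_zero_of_lt (by omega), zero_mul]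
  rw [evenChooseSum, eventually_constant_sum hvanish (by omega),
    eventually_constant_sum hvanish (n := N + 1) (by omega)]

theorem oddChooseSum_eq_zero {N m : ℕ} (h : N ≤ 2 * m) : oddChooseSum N m = 0 := by
  refine sum_eq_zero fun i _ => ?_
  rcases lt_or_ge i m with hi | hi
  · rw [Nat.choose_eq_zero_of_lt hi, mul_zero]
  · rw [Nat.choose_eq_zero_of_lt (by omega), zero_mul]

theorem oddChooseSum_succ (N m : ℕ) :
    oddChooseSum (N + 1) m = evenChooseSum N m + oddChooseSum N m := by
  rw [← sum_range_eq_evenChooseSum (N := N) (M := N + 2) m (by omega),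
    ← sum_range_eq_oddChooseSum (N := N) (M := N + 2) m (by omega), oddChooseSum, ← sum_add_distrib]
  simp only [Nat.choose_succ_succ', add_mul]

theorem evenChooseSum_succ (N m : ℕ) :
    evenChooseSum (N + 1) m =
      evenChooseSum N m + ∑ i ∈ range (N + 1), N.choose (2 * i + 1) * (i + 1).choose m := by
  have hshift : ∀ i, (N + 1).choose (2 * (i + 1)) * (i + 1).choose m =
      N.choose (2 * (i + 1)) * (i + 1).choose m + N.choose (2 * i + 1) * (i + 1).choose m :=
    fun i => by rw [mul_add 2 i 1, mul_one, Nat.choose_succ_succ', add_mul, add_comm]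
  rw [evenChooseSum, sum_range_succ', ← sum_range_eq_evenChooseSum m (M := N + 2) (by omega),
    sum_range_succ' _ (N + 1)]
  simp only [hshift, sum_add_distrib, Nat.choose_zero_right, mul_zero]
  ring

theorem evenChooseSum_add_oddChooseSum_zero (N : ℕ) :
    evenChooseSum N 0 + oddChooseSum N 0 = 2 ^ N := by
  induction N with
  | zero => decide
  | succ N ih =>
    have hshift : ∑ i ∈ range (N + 1), N.choose (2 * i + 1) * (i + 1).choose 0 =
        oddChooseSum N 0 := by simp only [Nat.choose_zero_right, oddChooseSum]
    rw [evenChooseSum_succ, oddChooseSum_succ, hshift, pow_succ, ← ih]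
    ring

theorem oddChooseSum_succ_zero (N : ℕ) : oddChooseSum (N + 1) 0 = 2 ^ N := by
  rw [oddChooseSum_succ, evenChooseSum_add_oddChooseSum_zero]

theorem oddChooseSum_add_two (N m : ℕ) :
    oddChooseSum (N + 2) (m + 1) = 2 * oddChooseSum (N + 1) (m + 1) + oddChooseSum N m := by
  have hshift : ∑ i ∈ range (N + 1), N.choose (2 * i + 1) * (i + 1).choose (m + 1) =
      oddChooseSum N m + oddChooseSum N (m + 1) := by
    simp only [oddChooseSum, Nat.choose_succ_succ', mul_add, sum_add_distrib]
  rw [oddChooseSum_succ (N + 1), evenChooseSum_succ, hshift, oddChooseSum_succ N]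
  ring

theorem oddChooseSum_two_mul_add_one_add (m k : ℕ) :
    oddChooseSum (2 * m + 1 + k) m = 2 ^ k * (m + k).choose k := by
  induction m generalizing k with
  | zero => simp [add_comm 1 k, oddChooseSum_succ_zero]
  | succ m ihm =>
    induction k with
    | zero =>
      rw [show 2 * (m + 1) + 1 + 0 = 2 * m + 1 + 2 by ring, oddChooseSum_add_two,
        oddChooseSum_eq_zero (by omega)]
      simpa using ihm 0
    | succ k ihk =>
      rw [show 2 * (m + 1) + 1 + (k + 1) = 2 * m + 1 + (k + 1) + 2 by ring, oddChooseSum_add_two,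
        show 2 * m + 1 + (k + 1) + 1 = 2 * (m + 1) + 1 + k by ring, ihk, ihm,
        show m + 1 + (k + 1) = m + 1 + k + 1 by ring, Nat.choose_succ_succ',
        show m + (k + 1) = m + 1 + k by ring]
      ring

theorem binom_sum_identity (n d : ℕ) (h : d + 1 ≤ n) :
    ∑ i ∈ Finset.range (n + 1), Nat.choose (2 * n) (2 * i + 1) * Nat.choose i (n - d - 1)
      = 2 ^ (2 * d + 1) * Nat.choose (n + d) (2 * d + 1) := by
  obtain ⟨m, rfl⟩ : ∃ m, n = m + d + 1 := ⟨n - d - 1, by omega⟩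
  rw [sum_range_eq_oddChooseSum _ (by omega), show m + d + 1 - d - 1 = m by omega,
    show 2 * (m + d + 1) = 2 * m + 1 + (2 * d + 1) by ring, oddChooseSum_two_mul_add_one_add,
    show m + (2 * d + 1) = m + d + 1 + d by ring]
end

section
/- For all nonnegative integers $x$ and positive integers $n$ with $x \ge n$, the rational number $\frac{1}{n!}\sum_{j \text{ odd}, 0 \le j \le n} \binom{n}{j} j^x$ differs from $(-1)^{n+1} S(x,n)$ by a rational number of 2-adic valuation at least $x - \nu(n!)$, where $S(x,n)$ is the Stirling number of the second kind. -/
/-- `P n x = (1/n!) ∑_{j odd, 0 ≤ j ≤ n} C(n,j) j^x`. -/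
def P (n x : ℕ) : ℚ :=
  (1 / (Nat.factorial n : ℚ)) *
    ∑ j ∈ Finset.range (n + 1), if Odd j then (Nat.choose n j : ℚ) * (j : ℚ) ^ x else 0

/-- Stirling number of the second kind, via the alternating sum formula. -/
def Stir (x n : ℕ) : ℚ :=
  (1 / (Nat.factorial n : ℚ)) *
    ∑ j ∈ Finset.range (n + 1), (-1 : ℚ) ^ (n - j) * (Nat.choose n j : ℚ) * (j : ℚ) ^ x

/-!
Multiplied by `(-1)^(n+1)`, the `j`-th term of the alternating sum has sign `(-1)^(j+1)`. So, term by
term, the odd `j` cancel and each even `j = 2i` leaves `C(n, 2i) (2i)^x = 2^x C(n, 2i) i^x`: the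
difference is `2^x` times an integer divided by `n!`, of 2-adic valuation at least `x - ν(n!)`.
-/

open Finset

def evenBinomSum (n x : ℕ) : ℕ :=
  ∑ j ∈ range (n + 1), if Even j then n.choose j * (j / 2) ^ x else 0

lemma neg_one_pow_succ_mul_neg_one_pow_sub {n j : ℕ} (hj : j ≤ n) :
    (-1 : ℚ) ^ (n + 1) * (-1) ^ (n - j) = (-1) ^ (j + 1) := by
  rw [← pow_add, show n + 1 + (n - j) = j + 1 + 2 * (n - j) by omega, pow_add, pow_mul]
  simp

lemma odd_term_sub_signed_term (c j x : ℕ) :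
    (if Odd j then (c : ℚ) * (j : ℚ) ^ x else 0) - (-1) ^ (j + 1) * ((c : ℚ) * (j : ℚ) ^ x)
      = if Even j then (c : ℚ) * (2 : ℚ) ^ x * ((j / 2 : ℕ) : ℚ) ^ x else 0 := by
  rcases Nat.even_or_odd j with he | ho
  · obtain ⟨i, rfl⟩ := he
    rw [if_neg (Nat.not_odd_iff_even.mpr ⟨i, rfl⟩), if_pos ⟨i, rfl⟩, pow_succ,
      Even.neg_one_pow ⟨i, rfl⟩, show (i + i) / 2 = i by omega]
    push_cast
    ring
  · simp [ho, Nat.not_even_iff_odd.mpr ho, pow_succ, ho.neg_one_pow]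

lemma P_sub_neg_one_pow_mul_Stir (n x : ℕ) :
    P n x - (-1 : ℚ) ^ (n + 1) * Stir x n
      = (2 : ℚ) ^ x * (evenBinomSum n x : ℚ) / (n.factorial : ℚ) := by
  have hsum : ∑ j ∈ range (n + 1),
      ((if Odd j then (n.choose j : ℚ) * (j : ℚ) ^ x else 0)
        - (-1) ^ (n + 1) * ((-1) ^ (n - j) * (n.choose j : ℚ) * (j : ℚ) ^ x))
      = (2 : ℚ) ^ x * (evenBinomSum n x : ℚ) := by
    rw [evenBinomSum, Nat.cast_sum, mul_sum]
    refine sum_congr rfl fun j hj => ?_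
    rw [mul_assoc ((-1 : ℚ) ^ (n - j)), ← mul_assoc,
      neg_one_pow_succ_mul_neg_one_pow_sub (Nat.lt_succ_iff.mp (mem_range.mp hj)),
      odd_term_sub_signed_term]
    split_ifs <;> push_cast <;> ring
  rw [P, Stir, mul_left_comm, ← mul_sub, mul_sum, ← sum_sub_distrib, hsum]
  ring

lemma sub_padicValNat_le_padicValRat_pow_mul_div {p : ℕ} [Fact p.Prime] {m d : ℕ}
    (x : ℕ) (hm : m ≠ 0) (hd : d ≠ 0) :
    (x : ℤ) - padicValNat p d ≤ padicValRat p ((p : ℚ) ^ x * m / d) := by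
  have hp : p ≠ 0 := (Fact.out : p.Prime).ne_zero
  rw [show (p : ℚ) ^ x * m = ((p ^ x * m : ℕ) : ℚ) by push_cast; rfl,
    padicValRat.div (by positivity) (by exact_mod_cast hd), padicValRat.of_nat, padicValRat.of_nat,
    padicValNat.mul (pow_ne_zero x hp) hm, padicValNat.prime_pow]
  omega

theorem P_approx_Stirling_general (n x : ℕ) :
    P n x - (-1 : ℚ) ^ (n + 1) * Stir x n = 0 ∨
      padicValRat 2 (P n x - (-1 : ℚ) ^ (n + 1) * Stir x n)
        ≥ (x : ℤ) - padicValNat 2 (Nat.factorial n) := by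
  rw [P_sub_neg_one_pow_mul_Stir]
  by_cases hT : evenBinomSum n x = 0
  · left
    simp [hT]
  · right
    exact_mod_cast sub_padicValNat_le_padicValRat_pow_mul_div x hT (Nat.factorial_ne_zero n)

theorem P_approx_Stirling (n x : ℕ) (hn : 0 < n) (hx : n ≤ x) :
    P n x - (-1 : ℚ) ^ (n + 1) * Stir x n = 0 ∨
      padicValRat 2 (P n x - (-1 : ℚ) ^ (n + 1) * Stir x n)
        ≥ (x : ℤ) - padicValNat 2 (Nat.factorial n) :=
  P_approx_Stirling_general n x
end

section
/- For integers $e \ge 1$ and $0 < d < 2^e$, the rational numbers $\frac{2^{2^e+d-1-\alpha(d)}}{d!\,(2^e)!}$ and $\frac{2^{2^e+d-1-\alpha(d)}}{(2^e+d)!}$ are 2-adic integers that are congruent modulo $2^{e - \lfloor \log_2 d\rfloor}$ (i.e., their difference has 2-adic valuation at least $e - \lfloor \log_2 d \rfloor$). -/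
/-! Write `N = 2^e + d - 1 - α(d)`. Legendre's formula `ν(n!) = n - α(n)` gives
`N = ν(d! (2^e)!)`, so the first fraction `x` is a 2-adic unit. The second one is `x / C` with
`C = binom(2^e + d, d)`, so the difference is `(x / C) (C - 1)`. Since
`binom(m + d, d) = ∏_{j ≤ d} (1 + m / j)` and `ν(2^e / j) ≥ e - ⌊log₂ d⌋` for `j ≤ d`, we get
`C ≡ 1 mod 2^(e - ⌊log₂ d⌋)`; in particular `C` is odd. -/

/-- `α n` is the number of 1's in the binary expansion of `n`. -/
def binAlpha (n : ℕ) : ℕ := (Nat.digits 2 n).sum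

open Nat

theorem binAlpha_two_pow (e : ℕ) : binAlpha (2 ^ e) = 1 := by
  simpa [binAlpha] using congrArg List.sum (digits_base_pow_mul (k := e) one_lt_two one_pos)

theorem padicValNat_two_factorial (n : ℕ) : padicValNat 2 n ! = n - binAlpha n := by
  simpa [binAlpha] using sub_one_mul_padicValNat_factorial (p := 2) n

theorem padicValNat_factorial_mul_factorial_two_pow (d e : ℕ) :
    padicValNat 2 (d ! * (2 ^ e)!) = 2 ^ e + d - 1 - binAlpha d := by
  rw [padicValNat.mul (factorial_ne_zero _) (factorial_ne_zero _), padicValNat_two_factorial,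
    padicValNat_two_factorial, binAlpha_two_pow]
  have : binAlpha d ≤ d := digit_sum_le 2 d
  have := Nat.one_le_two_pow (n := e)
  omega

theorem pow_sub_log_dvd_choose_add_sub_one {p e m : ℕ} (hp : p.Prime) (hm : p ^ e ∣ m) (d : ℕ) :
    p ^ (e - log p d) ∣ (m + d).choose d - 1 := by
  induction d with
  | zero => simp
  | succ k ih =>
    set t := log p (k + 1)
    rcases le_or_gt e t with het | hte
    · simp [Nat.sub_eq_zero_of_le het]
    obtain ⟨v, u, hpu, hk⟩ := exists_eq_pow_mul_and_not_dvd k.add_one_ne_zero p hp.ne_one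
    have hvt : v ≤ t := le_log_of_pow_le hp.one_lt <|
      le_of_dvd k.succ_pos (hk ▸ dvd_mul_right _ _)
    have hlog : log p k ≤ t := log_mono_right k.le_succ
    set C' := (m + k).choose k
    set C := (m + k + 1).choose (k + 1)
    have hC' : 1 ≤ C' := choose_pos (le_add_left _ _)
    have hC : 1 ≤ C := choose_pos (by omega)
    have hstep : (k + 1) * (C - 1) = (k + 1) * (C' - 1) + m * C' := by
      have hrec := add_one_mul_choose_eq (m + k) k
      zify [hC, hC'] at hrec ⊢
      linear_combination -hrec
    -- Both summands are divisible by `p ^ (v + (e - t))`, and `p ^ v` is all of `p` in `k + 1`.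
    have hdvd : p ^ v * p ^ (e - t) ∣ p ^ v * (u * (C - 1)) := by
      rw [← mul_assoc, ← hk, hstep]
      refine dvd_add (mul_dvd_mul (hk ▸ dvd_mul_right _ _) ((pow_dvd_pow p (by omega)).trans ih))
        (dvd_mul_of_dvd_left ?_ _)
      rw [← pow_add]
      exact (pow_dvd_pow p (by omega)).trans hm
    have hcop : Coprime (p ^ (e - t)) u :=
      Coprime.pow_left _ ((hp.coprime_iff_not_dvd).2 hpu)
    rw [← add_assoc]
    exact hcop.dvd_of_dvd_mul_left (Nat.dvd_of_mul_dvd_mul_left (pow_pos hp.pos _) hdvd)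

theorem not_two_dvd_choose_two_pow_add {e d : ℕ} (hd : d < 2 ^ e) :
    ¬2 ∣ (2 ^ e + d).choose d := by
  rcases d.eq_zero_or_pos with rfl | hd0
  · simp
  have hlog : log 2 d < e := log_lt_of_lt_pow hd0.ne' hd
  have h2 : 2 ∣ (2 ^ e + d).choose d - 1 := (dvd_pow_self 2 (by omega)).trans
    (pow_sub_log_dvd_choose_add_sub_one prime_two dvd_rfl d)
  have : 1 ≤ (2 ^ e + d).choose d := choose_pos (le_add_left _ _)
  omega

theorem padicValRat_pow_padicValNat_div_self {p n : ℕ} [Fact p.Prime] (hn : n ≠ 0) :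
    padicValRat p ((p : ℚ) ^ padicValNat p n / n) = 0 := by
  have hp : (p : ℚ) ≠ 0 := Nat.cast_ne_zero.2 (Fact.out : p.Prime).ne_zero
  rw [padicValRat.div (pow_ne_zero _ hp) (Nat.cast_ne_zero.2 hn), padicValRat.pow _,
    padicValRat.self (Fact.out : p.Prime).one_lt, padicValRat.of_nat]
  ring

theorem padicValRat_div_natCast_of_not_dvd {p c : ℕ} [Fact p.Prime] (hc : ¬p ∣ c) (x : ℚ) :
    padicValRat p (x / c) = padicValRat p x := by
  rcases eq_or_ne x 0 with rfl | hx
  · simp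
  rw [padicValRat.div hx (Nat.cast_ne_zero.2 (by rintro rfl; exact hc (dvd_zero p))),
    padicValRat.of_nat, padicValNat.eq_zero_of_not_dvd hc]
  simp

theorem le_padicValRat_sub_div_natCast {p c k : ℕ} [Fact p.Prime] {x : ℚ}
    (hx : padicValRat p x = 0) (hc : ¬p ∣ c) (hk : p ^ k ∣ c - 1) :
    x - x / c = 0 ∨ (k : ℤ) ≤ padicValRat p (x - x / c) := by
  have hc0 : c ≠ 0 := by rintro rfl; exact hc (dvd_zero p)
  have hsplit : x - x / c = x / c * ((c - 1 : ℕ) : ℚ) := by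
    rw [Nat.cast_sub (by omega), Nat.cast_one]
    field_simp
  rcases eq_or_ne (x / c * ((c - 1 : ℕ) : ℚ)) 0 with h0 | hne
  · exact .inl (hsplit.trans h0)
  right
  obtain ⟨hxc, hc1⟩ := mul_ne_zero_iff.1 hne
  rw [hsplit, padicValRat.mul hxc hc1, padicValRat_div_natCast_of_not_dvd hc, hx,
    padicValRat.of_nat, zero_add, Nat.cast_le]
  exact ((padicValNat_dvd_iff k _).1 hk).resolve_left (by exact_mod_cast hc1)

theorem factorial_frac_congr_general (e d : ℕ) (hd : 0 < d) (hd2 : d < 2 ^ e) :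
    0 ≤ padicValRat 2
        ((2 : ℚ) ^ (2 ^ e + d - 1 - binAlpha d)
          / ((Nat.factorial d : ℚ) * (Nat.factorial (2 ^ e) : ℚ))) ∧
    0 ≤ padicValRat 2
        ((2 : ℚ) ^ (2 ^ e + d - 1 - binAlpha d) / (Nat.factorial (2 ^ e + d) : ℚ)) ∧
    ((2 : ℚ) ^ (2 ^ e + d - 1 - binAlpha d)
          / ((Nat.factorial d : ℚ) * (Nat.factorial (2 ^ e) : ℚ))
        - (2 : ℚ) ^ (2 ^ e + d - 1 - binAlpha d) / (Nat.factorial (2 ^ e + d) : ℚ) = 0 ∨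
      padicValRat 2
          ((2 : ℚ) ^ (2 ^ e + d - 1 - binAlpha d)
              / ((Nat.factorial d : ℚ) * (Nat.factorial (2 ^ e) : ℚ))
            - (2 : ℚ) ^ (2 ^ e + d - 1 - binAlpha d) / (Nat.factorial (2 ^ e + d) : ℚ))
        ≥ (e : ℤ) - Nat.log 2 d) := by
  have hlog : log 2 d < e := log_lt_of_lt_pow hd.ne' hd2
  have hC := not_two_dvd_choose_two_pow_add hd2
  have hx := padicValRat_pow_padicValNat_div_self (p := 2)
    (mul_ne_zero (factorial_ne_zero d) (factorial_ne_zero (2 ^ e)))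
  rw [padicValNat_factorial_mul_factorial_two_pow] at hx
  push_cast at hx
  have hF : ((2 ^ e + d)! : ℚ) = (d ! : ℚ) * (2 ^ e)! * (2 ^ e + d).choose d := by
    rw [← add_choose_mul_factorial_mul_factorial]
    push_cast
    ring
  rw [hF, ← div_div _ ((d ! : ℚ) * (2 ^ e)!)]
  refine ⟨hx.ge, (padicValRat_div_natCast_of_not_dvd hC _ ▸ hx).ge, ?_⟩
  simpa only [Nat.cast_sub hlog.le] using
    le_padicValRat_sub_div_natCast hx hC (pow_sub_log_dvd_choose_add_sub_one prime_two dvd_rfl d)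

theorem factorial_frac_congr (e d : ℕ) (he : 1 ≤ e) (hd : 0 < d) (hd2 : d < 2 ^ e) :
    0 ≤ padicValRat 2
        ((2 : ℚ) ^ (2 ^ e + d - 1 - binAlpha d)
          / ((Nat.factorial d : ℚ) * (Nat.factorial (2 ^ e) : ℚ))) ∧
    0 ≤ padicValRat 2
        ((2 : ℚ) ^ (2 ^ e + d - 1 - binAlpha d) / (Nat.factorial (2 ^ e + d) : ℚ)) ∧
    ((2 : ℚ) ^ (2 ^ e + d - 1 - binAlpha d)
          / ((Nat.factorial d : ℚ) * (Nat.factorial (2 ^ e) : ℚ))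
        - (2 : ℚ) ^ (2 ^ e + d - 1 - binAlpha d) / (Nat.factorial (2 ^ e + d) : ℚ) = 0 ∨
      padicValRat 2
          ((2 : ℚ) ^ (2 ^ e + d - 1 - binAlpha d)
              / ((Nat.factorial d : ℚ) * (Nat.factorial (2 ^ e) : ℚ))
            - (2 : ℚ) ^ (2 ^ e + d - 1 - binAlpha d) / (Nat.factorial (2 ^ e + d) : ℚ))
        ≥ (e : ℤ) - Nat.log 2 d) :=
  factorial_frac_congr_general e d hd hd2
end

section
/- If $0 < r \le D$ and $e \ge 1$, then the 2-adic valuation of $\frac{2^{2^e - r - 1}}{(2^e - r)!}$ is at least $e - 1 - \lfloor \log_2 D \rfloor$ (assuming $r \le 2^e$). -/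
/-!
By Legendre's formula `ν(2^(m-1) / m!) = s(m) - 1`, where `s` is the binary digit sum.
For `m = 2^e - r = (2^e - 1) - (r - 1)` the binary digits of `m` are those of `r - 1` flipped,
so `s(m) = e - s(r - 1)`, and `2^s(r-1) ≤ r ≤ D` gives `s(r - 1) ≤ ⌊log₂ D⌋`.
-/

open Nat

lemma digits_two_sum_eq (n : ℕ) : (digits 2 n).sum = n % 2 + (digits 2 (n / 2)).sum := by
  rcases n.eq_zero_or_pos with rfl | hn
  · simp
  · rw [digits_def' one_lt_two hn, List.sum_cons]

lemma two_pow_digits_sum_le (n : ℕ) : 2 ^ (digits 2 n).sum ≤ n + 1 := by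
  induction n using Nat.strong_induction_on with
  | _ n ih =>
    rcases n.eq_zero_or_pos with rfl | hn
    · simp
    have hq := ih (n / 2) (div_lt_self hn one_lt_two)
    rw [digits_two_sum_eq, pow_add]
    rcases mod_two_eq_zero_or_one n with h | h <;> rw [h] <;> omega

lemma digits_two_sum_le_log {n D : ℕ} (h : n < D) : (digits 2 n).sum ≤ Nat.log 2 D :=
  le_log_of_pow_le one_lt_two ((two_pow_digits_sum_le n).trans h)

lemma digits_two_sum_add_sum_complement {e n : ℕ} (h : n < 2 ^ e) :
    (digits 2 n).sum + (digits 2 (2 ^ e - 1 - n)).sum = e := by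
  induction e generalizing n with
  | zero => simp_all
  | succ e ih =>
    have hq : n / 2 < 2 ^ e := by omega
    have hc : (2 ^ (e + 1) - 1 - n) / 2 = 2 ^ e - 1 - n / 2 := by omega
    have hcompl := ih hq
    rw [digits_two_sum_eq n, digits_two_sum_eq (2 ^ (e + 1) - 1 - n), hc]
    omega

lemma padicValRat_two_zpow_div_factorial (m : ℕ) :
    padicValRat 2 ((2 : ℚ) ^ ((m : ℤ) - 1) / (m ! : ℚ)) = (digits 2 m).sum - 1 := by
  have hleg := sub_one_mul_padicValNat_factorial (p := 2) m
  have hle := digit_sum_le 2 m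
  have htwo : padicValRat 2 (2 : ℚ) = 1 := by exact_mod_cast padicValRat.self (p := 2) one_lt_two
  rw [padicValRat.div (by positivity) (by positivity), padicValRat.zpow,
    padicValRat.of_nat, htwo]
  omega

theorem val_pow_div_factorial_general (e r D : ℕ) (hr : 0 < r) (hrD : r ≤ D)
    (hre : r ≤ 2 ^ e) :
    padicValRat 2 ((2 : ℚ) ^ ((2 ^ e : ℤ) - r - 1) / (Nat.factorial (2 ^ e - r) : ℚ))
      ≥ (e : ℤ) - 1 - Nat.log 2 D := by
  have hexp : (2 ^ e : ℤ) - r = ((2 ^ e - r : ℕ) : ℤ) := by push_cast [hre]; ring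
  rw [hexp, padicValRat_two_zpow_div_factorial]
  have hcompl := digits_two_sum_add_sum_complement (e := e) (n := r - 1) (by omega)
  rw [show 2 ^ e - 1 - (r - 1) = 2 ^ e - r by omega] at hcompl
  have hlog := digits_two_sum_le_log (n := r - 1) (by omega : r - 1 < D)
  omega

theorem val_pow_div_factorial (e r D : ℕ) (hr : 0 < r) (hrD : r ≤ D) (he : 1 ≤ e)
    (hre : r ≤ 2 ^ e) :
    padicValRat 2 ((2 : ℚ) ^ ((2 ^ e : ℤ) - r - 1) / (Nat.factorial (2 ^ e - r) : ℚ))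
      ≥ (e : ℤ) - 1 - Nat.log 2 D :=
  val_pow_div_factorial_general e r D hr hrD hre
end

section
/- Suppose $f : \mathbb{Z} \to \mathbb{Z} \cup \{\infty\}$ satisfies $f(0) \ge 0$ and, for all integers $x$ and all $d \ge 0$, $f(x+2^d) = \min'(f(x), d)$, where $\min'(a,b) = \min(a,b)$ if $a \ne b$ and $\min'(a,a) > a$ (i.e., $f(x+2^d) = \min(f(x),d)$ when $f(x) \ne d$, and $f(x+2^d) > d$ when $f(x) = d$). Then there exists a 2-adic integer $z_0$ such that $f(x) = \nu(x - z_0)$ for all integers $x$. -/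
-- The 2-adic valuation on `ℤ_[2]`, with `ν 0 = ∞`.
open Classical in
noncomputable def nu2 (z : ℤ_[2]) : WithTop ℤ :=
  if z = 0 then ⊤ else (z.valuation : WithTop ℤ)

/-!
Each superlevel set `{x | n ≤ f x}` is a single residue class modulo `2 ^ n`. It is invariant
under `x ↦ x + 2 ^ n`; and if it contained `x, y` with `x - y = 2 ^ k * odd`, `k < n`, then
`x ≡ y + 2 ^ k [mod 2 ^ (k + 1)]` while `f (y + 2 ^ k) = k < k + 1`, so `f x < k + 1 ≤ n`.
These classes are nonempty and nested, hence shrink to a 2-adic integer `z₀`, and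
`n ≤ f x ↔ 2 ^ n ∣ x - z₀` for every `n` says exactly that `f x = ν (x - z₀)`.
-/

theorem WithTop.natCast_succ_le_of_lt {n : ℕ} {t : WithTop ℤ} (h : (n : WithTop ℤ) < t) :
    ((n + 1 : ℕ) : WithTop ℤ) ≤ t := by
  induction t using WithTop.recTopCoe with
  | top => exact le_top
  | coe c => exact_mod_cast h

theorem WithTop.le_of_forall_natCast_le {s t : WithTop ℤ} (hs : 0 ≤ s)
    (h : ∀ n : ℕ, (n : WithTop ℤ) ≤ s → (n : WithTop ℤ) ≤ t) : s ≤ t := by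
  induction s using WithTop.recTopCoe with
  | top =>
    induction t using WithTop.recTopCoe with
    | top => exact le_rfl
    | coe c =>
      have := h (c.toNat + 1) le_top
      norm_cast at this
      omega
  | coe c =>
    lift c to ℕ using WithTop.coe_nonneg.mp hs
    exact_mod_cast h c (by simp)

theorem WithTop.eq_of_forall_natCast_le_iff {s t : WithTop ℤ} (ht : 0 ≤ t)
    (h : ∀ n : ℕ, (n : WithTop ℤ) ≤ s ↔ (n : WithTop ℤ) ≤ t) : s = t := by
  have hs : 0 ≤ s := by simpa using (h 0).mpr (by simpa using ht)
  exact le_antisymm (le_of_forall_natCast_le hs fun n => (h n).mp)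
    (le_of_forall_natCast_le ht fun n => (h n).mpr)

theorem PadicInt.exists_forall_pow_dvd_sub {p : ℕ} [Fact p.Prime] (a : ℕ → ℤ)
    (ha : ∀ n, (p : ℤ) ^ n ∣ a (n + 1) - a n) :
    ∃ z : ℤ_[p], ∀ n, (p : ℤ_[p]) ^ n ∣ z - a n := by
  have hmono : ∀ n m, n ≤ m → (p : ℤ) ^ n ∣ a m - a n := by
    intro n m hnm
    induction m, hnm using Nat.le_induction with
    | base => simp
    | succ m hnm ih =>
      rw [← sub_add_sub_cancel]
      exact dvd_add ((pow_dvd_pow _ hnm).trans (ha m)) ih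
  obtain ⟨z, hz⟩ :=
    exists_clusterPt_of_compactSpace (Filter.map (fun n => (a n : ℤ_[p])) Filter.atTop)
  refine ⟨z, fun n => ?_⟩
  let ball := Metric.closedBall (a n : ℤ_[p]) ((p : ℝ) ^ (-n : ℤ))
  have mem_ball (w : ℤ_[p]) : w ∈ ball ↔ (p : ℤ_[p]) ^ n ∣ w - a n := by
    rw [Metric.mem_closedBall, dist_eq_norm, norm_le_pow_iff_mem_span_pow,
      Ideal.mem_span_singleton]
  have hball : ∀ᶠ m in Filter.atTop, (a m : ℤ_[p]) ∈ ball :=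
    Filter.eventually_atTop.mpr ⟨n, fun m hm => (mem_ball _).mpr (by
      rw [← Int.cast_sub, pow_p_dvd_int_iff]; exact hmono n m hm)⟩
  exact (mem_ball z).mp (Metric.isClosed_closedBall.mem_of_mapClusterPt hz hball)

theorem nu2_nonneg (w : ℤ_[2]) : 0 ≤ nu2 w := by
  unfold nu2
  split_ifs <;> simp

theorem natCast_le_nu2_iff (w : ℤ_[2]) (n : ℕ) :
    (n : WithTop ℤ) ≤ nu2 w ↔ (2 : ℤ_[2]) ^ n ∣ w := by
  unfold nu2
  split_ifs with hw
  · simp [hw]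
  · have := PadicInt.mem_span_pow_iff_le_valuation w hw n
    rw [Ideal.mem_span_singleton, Nat.cast_ofNat] at this
    rw [this]
    norm_cast

section

variable {f : ℤ → WithTop ℤ}
  (hne : ∀ (x : ℤ) (d : ℕ), f x ≠ (d : ℤ) → f (x + 2 ^ d) = min (f x) (d : ℤ))
  (heq : ∀ (x : ℤ) (d : ℕ), f x = (d : ℤ) → (d : WithTop ℤ) < f (x + 2 ^ d))

include hne in
theorem apply_add_two_pow_of_natCast_lt {y : ℤ} {k : ℕ} (h : (k : WithTop ℤ) < f y) :
    f (y + 2 ^ k) = k := by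
  rw [hne y k (by simpa using h.ne'), WithTop.coe_natCast, min_eq_right h.le]

include hne heq in
theorem natCast_le_apply_add_two_pow_iff {x : ℤ} {n : ℕ} :
    (n : WithTop ℤ) ≤ f (x + 2 ^ n) ↔ (n : WithTop ℤ) ≤ f x := by
  constructor
  · intro h
    by_contra! hlt
    rw [hne x n (by simpa using hlt.ne), WithTop.coe_natCast, min_eq_left hlt.le] at h
    exact h.not_gt hlt
  · intro h
    rcases h.eq_or_lt with hfx | hlt
    · exact (heq x n (by simpa using hfx.symm)).le
    · exact (apply_add_two_pow_of_natCast_lt hne hlt).ge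

include hne heq in
theorem natCast_le_apply_add_two_pow_mul_iff {x : ℤ} {n : ℕ} (m : ℤ) :
    (n : WithTop ℤ) ≤ f (x + 2 ^ n * m) ↔ (n : WithTop ℤ) ≤ f x := by
  induction m using Int.induction_on with
  | zero => simp
  | succ i ih =>
    rw [mul_add_one, ← add_assoc, natCast_le_apply_add_two_pow_iff hne heq, ih]
  | pred i ih =>
    rw [← ih, ← natCast_le_apply_add_two_pow_iff hne heq]
    ring_nf

include hne heq in
theorem natCast_le_apply_iff_two_pow_dvd_sub {x y : ℤ} {n : ℕ}
    (hy : (n : WithTop ℤ) ≤ f y) :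
    (n : WithTop ℤ) ≤ f x ↔ (2 : ℤ) ^ n ∣ x - y := by
  constructor
  · intro hx
    suffices ∀ k ≤ n, (2 : ℤ) ^ k ∣ x - y from this n le_rfl
    intro k hk
    induction k with
    | zero => simp
    | succ k ih =>
      obtain ⟨c, hc⟩ := ih (by omega)
      obtain ⟨m, rfl | rfl⟩ := Int.even_or_odd' c
      · exact ⟨m, by rw [hc]; ring⟩
      · have hyk : f (y + 2 ^ k) = k := apply_add_two_pow_of_natCast_lt hne
          (lt_of_lt_of_le (by exact_mod_cast (by omega : k < n)) hy)
        have hxk := natCast_le_apply_add_two_pow_mul_iff hne heq (x := y + 2 ^ k) (n := k + 1) m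
        rw [show y + 2 ^ k + 2 ^ (k + 1) * m = x by linear_combination -hc, hyk] at hxk
        have hkx : ((k + 1 : ℕ) : WithTop ℤ) ≤ f x := le_trans (by exact_mod_cast hk) hx
        exact absurd (hxk.mp hkx) (by exact_mod_cast (by omega : ¬ k + 1 ≤ k))
  · rintro ⟨m, hm⟩
    rwa [eq_add_of_sub_eq' hm, natCast_le_apply_add_two_pow_mul_iff hne heq]

end

theorem exists_natCast_le_apply {f : ℤ → WithTop ℤ} (h0 : 0 ≤ f 0)
    (heq : ∀ (x : ℤ) (d : ℕ), f x = (d : ℤ) → (d : WithTop ℤ) < f (x + 2 ^ d))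
    (n : ℕ) : ∃ y, (n : WithTop ℤ) ≤ f y := by
  induction n with
  | zero => exact ⟨0, by simpa using h0⟩
  | succ n ih =>
    obtain ⟨y, hy⟩ := ih
    rcases hy.eq_or_lt with hfy | hlt
    · exact ⟨y + 2 ^ n, WithTop.natCast_succ_le_of_lt (heq y n (by simpa using hfy.symm))⟩
    · exact ⟨y, WithTop.natCast_succ_le_of_lt hlt⟩

theorem exists_zero_of_minprime (f : ℤ → WithTop ℤ)
    (h0 : 0 ≤ f 0)
    (hne : ∀ (x : ℤ) (d : ℕ), f x ≠ (d : ℤ) → f (x + 2 ^ d) = min (f x) (d : ℤ))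
    (heq : ∀ (x : ℤ) (d : ℕ), f x = (d : ℤ) → (d : WithTop ℤ) < f (x + 2 ^ d)) :
    ∃ z₀ : ℤ_[2], ∀ x : ℤ, f x = nu2 ((x : ℤ_[2]) - z₀) := by
  choose a ha using exists_natCast_le_apply h0 heq
  have hstep (n : ℕ) : ((2 : ℕ) : ℤ) ^ n ∣ a (n + 1) - a n := by
    have hle : (n : WithTop ℤ) ≤ f (a (n + 1)) :=
      le_trans (by exact_mod_cast n.le_succ) (ha (n + 1))
    exact_mod_cast (natCast_le_apply_iff_two_pow_dvd_sub hne heq (ha n)).mp hle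
  obtain ⟨z₀, hz₀⟩ := PadicInt.exists_forall_pow_dvd_sub a hstep
  refine ⟨z₀, fun x => WithTop.eq_of_forall_natCast_le_iff (nu2_nonneg _) fun n => ?_⟩
  calc (n : WithTop ℤ) ≤ f x ↔ (2 : ℤ) ^ n ∣ x - a n :=
        natCast_le_apply_iff_two_pow_dvd_sub hne heq (ha n)
    _ ↔ (2 : ℤ_[2]) ^ n ∣ ((x - a n : ℤ) : ℤ_[2]) := by
        exact_mod_cast (PadicInt.pow_p_dvd_int_iff n _).symm
    _ ↔ (2 : ℤ_[2]) ^ n ∣ (x : ℤ_[2]) - z₀ := by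
        rw [Int.cast_sub, ← sub_add_sub_cancel _ z₀, dvd_add_left (by exact_mod_cast hz₀ n)]
    _ ↔ (n : WithTop ℤ) ≤ nu2 ((x : ℤ_[2]) - z₀) := (natCast_le_nu2_iff _ n).symm
end

section
/- Suppose $g : \mathbb{Z} \to \mathbb{Q} \cup \{\infty\}$ and $c \in \mathbb{Z}$ satisfy $\nu(g(0)) \ge c$ and, for all integers $x$ and all $d \ge 0$, $\nu(g(x+2^d) - g(x)) = d + c$. Then there exists a 2-adic integer $z_0$ such that $\nu(g(x)) = \nu(x - z_0) + c$ for all integers $x$. -/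
open Classical in
noncomputable def nuQ2 (z : ℚ_[2]) : WithTop ℤ :=
  if z = 0 then ⊤ else (z.valuation : WithTop ℤ)

/-
Telescoping along steps of `2 ^ n` and the ultrametric inequality give
`ν (g y - g x) = ν (y - x) + c` for all integers `x ≠ y`: writing `y - x = 2 ^ n (2 j + 1)`, the
single step from `x` to `x + 2 ^ n` dominates the rest. Next, if `ν (g a) = n + c` exactly, then
`g (a + 2 ^ n)` is the sum of two numbers of valuation `n + c`, hence has larger valuation, because
the units of `ℤ_[2]` are all `≡ 1 mod 2`; this gives integers `a n` with `ν (g (a n)) ≥ n + c`.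
A limit point `z₀` of `a` in the compact `ℤ_[2]` is the required zero: let `n → ∞` in
`ν (g x - g (a n)) = ν (x - a n) + c`.
-/

open Filter Topology

lemma IsUltrametricDist.norm_sub_le_of_dvd {E : Type*} [SeminormedAddCommGroup E]
    [IsUltrametricDist E] {f : ℤ → E} {k : ℤ} {r : ℝ} (hf : ∀ x, ‖f (x + k) - f x‖ ≤ r)
    {x y : ℤ} (hxy : k ∣ y - x) : ‖f y - f x‖ ≤ r := by
  obtain ⟨m, hm⟩ := hxy
  rw [eq_add_of_sub_eq' hm]
  clear hm
  induction m using Int.induction_on with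
  | zero => simpa using (norm_nonneg _).trans (hf x)
  | succ m ih =>
    calc ‖f (x + k * (m + 1)) - f x‖
        = ‖(f (x + k * m + k) - f (x + k * m)) + (f (x + k * m) - f x)‖ := by
          rw [sub_add_sub_cancel, mul_add_one, add_assoc]
      _ ≤ r := (norm_add_le_max _ _).trans (max_le (hf _) ih)
  | pred m ih =>
    calc ‖f (x + k * (-m - 1)) - f x‖
        = ‖-(f (x + k * (-m - 1) + k) - f (x + k * (-m - 1))) + (f (x + k * -m) - f x)‖ := by
          rw [neg_sub, show x + k * (-m - 1) + k = x + k * -m by ring, sub_add_sub_cancel]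
      _ ≤ r := (norm_add_le_max _ _).trans (max_le ((norm_neg _).trans_le (hf _)) ih)

lemma PadicInt.two_norm_add_one_lt_one {u : ℤ_[2]} (hu : ‖u‖ = 1) : ‖u + 1‖ < 1 := by
  have hker (v : ℤ_[2]) : toZMod v = 0 ↔ ‖v‖ < 1 := by
    rw [← RingHom.mem_ker, ker_toZMod, IsLocalRing.mem_maximalIdeal, mem_nonunits]
  have hu' : toZMod u ≠ 0 := by rw [Ne, hker, hu]; exact lt_irrefl 1
  rw [← hker, map_add, map_one]
  generalize toZMod u = t at hu'
  revert t; decide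

lemma Padic.two_norm_add_lt_of_norm_eq {a b : ℚ_[2]} (hab : ‖a‖ = ‖b‖) (hb : b ≠ 0) :
    ‖a + b‖ < ‖b‖ := by
  have hb' : 0 < ‖b‖ := norm_pos_iff.2 hb
  have hu : ‖a / b‖ = 1 := by rw [norm_div, hab, div_self hb'.ne']
  have hlt := PadicInt.two_norm_add_one_lt_one (u := ⟨a / b, hu.le⟩) hu
  calc ‖a + b‖ = ‖a / b + 1‖ * ‖b‖ := by rw [← norm_mul, add_mul, div_mul_cancel₀ _ hb, one_mul]
    _ < 1 * ‖b‖ := mul_lt_mul_of_pos_right hlt hb'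
    _ = ‖b‖ := one_mul _

lemma norm_eq_zpow_neg_of_nuQ2_eq {z : ℚ_[2]} {m : ℤ} (h : nuQ2 z = m) :
    ‖z‖ = (2 : ℝ) ^ (-m) := by
  have hz : z ≠ 0 := by rintro rfl; simp [nuQ2] at h
  rw [nuQ2, if_neg hz, WithTop.coe_inj] at h
  simpa [h] using Padic.norm_eq_zpow_neg_valuation hz

lemma norm_le_zpow_neg_of_le_nuQ2 {z : ℚ_[2]} {m : ℤ} (h : (m : WithTop ℤ) ≤ nuQ2 z) :
    ‖z‖ ≤ (2 : ℝ) ^ (-m) := by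
  rcases eq_or_ne z 0 with rfl | hz
  · simp only [norm_zero]; positivity
  rw [nuQ2, if_neg hz, WithTop.coe_le_coe] at h
  rw [Padic.norm_eq_zpow_neg_valuation hz, Nat.cast_ofNat]
  exact zpow_le_zpow_right₀ one_le_two (neg_le_neg h)

lemma nuQ2_eq_add_of_norm_eq {a b : ℚ_[2]} {c : ℤ} (h : ‖a‖ = (2 : ℝ) ^ (-c) * ‖b‖) :
    nuQ2 a = nuQ2 b + c := by
  rcases eq_or_ne b 0 with rfl | hb
  · simp_all [nuQ2]
  have ha : a ≠ 0 := by
    rw [← norm_ne_zero_iff, h]; exact mul_ne_zero (by positivity) (norm_ne_zero_iff.2 hb)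
  rw [Padic.norm_eq_zpow_neg_valuation ha, Padic.norm_eq_zpow_neg_valuation hb, Nat.cast_ofNat,
    ← zpow_add₀ two_ne_zero, zpow_right_inj₀ two_pos (by norm_num : (2 : ℝ) ≠ 1)] at h
  rw [nuQ2, nuQ2, if_neg ha, if_neg hb, ← WithTop.coe_add]
  congr 1; omega

section TwoAdicIncrements

variable {g : ℤ → ℚ_[2]} {c : ℤ}

lemma norm_sub_le_of_two_pow_dvd
    (hd : ∀ (x : ℤ) (d : ℕ), ‖g (x + 2 ^ d) - g x‖ = (2 : ℝ) ^ (-((d : ℤ) + c)))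
    {n : ℕ} {x y : ℤ} (hxy : 2 ^ n ∣ y - x) :
    ‖g y - g x‖ ≤ (2 : ℝ) ^ (-((n : ℤ) + c)) :=
  IsUltrametricDist.norm_sub_le_of_dvd (fun x => (hd x n).le) hxy

lemma norm_sub_eq_of_two_pow_increment
    (hd : ∀ (x : ℤ) (d : ℕ), ‖g (x + 2 ^ d) - g x‖ = (2 : ℝ) ^ (-((d : ℤ) + c))) (x y : ℤ) :
    ‖g y - g x‖ = (2 : ℝ) ^ (-c) * ‖((y - x : ℤ) : ℚ_[2])‖ := by
  rcases eq_or_ne (y - x) 0 with hxy | hxy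
  · simp [sub_eq_zero.1 hxy]
  set n := padicValInt 2 (y - x)
  have hnorm : ‖((y - x : ℤ) : ℚ_[2])‖ = (2 : ℝ) ^ (-(n : ℤ)) := by
    rw [Padic.norm_eq_zpow_neg_valuation (Int.cast_ne_zero.2 hxy), Padic.valuation_intCast,
      Nat.cast_ofNat]
  obtain ⟨m, hm⟩ : 2 ^ n ∣ y - x := padicValInt_dvd _
  obtain ⟨j, rfl⟩ : Odd m := by
    refine Int.not_even_iff_odd.1 fun ⟨j, hj⟩ => ?_
    have := (padicValInt_dvd_iff (p := 2) (n + 1) (y - x)).1 ⟨j, by rw [hm, hj]; ring⟩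
    omega
  have hfar : ‖g y - g (x + 2 ^ n)‖ < ‖g (x + 2 ^ n) - g x‖ := by
    refine (norm_sub_le_of_two_pow_dvd hd (n := n + 1) ⟨j, by rw [pow_succ]; linarith⟩).trans_lt ?_
    rw [hd]
    exact zpow_lt_zpow_right₀ one_lt_two (by omega)
  rw [← sub_add_sub_cancel _ (g (x + 2 ^ n)),
    IsUltrametricDist.norm_add_eq_max_of_norm_ne_norm hfar.ne, max_eq_right hfar.le, hd, hnorm,
    ← zpow_add₀ two_ne_zero]
  ring_nf

lemma exists_norm_le_of_two_pow_increment
    (hd : ∀ (x : ℤ) (d : ℕ), ‖g (x + 2 ^ d) - g x‖ = (2 : ℝ) ^ (-((d : ℤ) + c)))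
    (h0 : ‖g 0‖ ≤ (2 : ℝ) ^ (-c)) (n : ℕ) :
    ∃ a : ℤ, ‖g a‖ ≤ (2 : ℝ) ^ (-((n : ℤ) + c)) := by
  induction n with
  | zero => exact ⟨0, by simpa using h0⟩
  | succ n ih =>
    obtain ⟨a, ha⟩ := ih
    have hgap (z : ℚ_[2]) :
        ‖z‖ ≤ (2 : ℝ) ^ (-(((n + 1 : ℕ) : ℤ) + c)) ↔ ‖z‖ < (2 : ℝ) ^ (-((n : ℤ) + c)) := by
      convert Padic.norm_le_pow_iff_norm_lt_pow_add_one z _ using 3 <;> push_cast <;> ring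
    by_cases hsmall : ‖g a‖ ≤ (2 : ℝ) ^ (-(((n + 1 : ℕ) : ℤ) + c))
    · exact ⟨a, hsmall⟩
    have heq : ‖g (a + 2 ^ n) - g a‖ = ‖g a‖ :=
      (hd a n).trans (le_antisymm (not_lt.1 ((hgap _).not.1 hsmall)) ha)
    have hne : g a ≠ 0 := by
      rintro h; rw [h, norm_zero] at hsmall; exact hsmall (by positivity)
    refine ⟨a + 2 ^ n, (hgap _).2 ?_⟩
    calc ‖g (a + 2 ^ n)‖ = ‖(g (a + 2 ^ n) - g a) + g a‖ := by rw [sub_add_cancel]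
      _ < ‖g a‖ := Padic.two_norm_add_lt_of_norm_eq heq hne
      _ ≤ _ := ha

end TwoAdicIncrements

theorem exists_norm_eq_mul_norm_sub {p : ℕ} [Fact p.Prime] {f : ℤ → ℚ_[p]} {C : ℝ}
    (hf : ∀ x y : ℤ, ‖f y - f x‖ = C * ‖((y - x : ℤ) : ℚ_[p])‖) {a : ℕ → ℤ}
    (ha : Tendsto (fun n => f (a n)) atTop (𝓝 0)) :
    ∃ z : ℤ_[p], ∀ x : ℤ, ‖f x‖ = C * ‖(x : ℚ_[p]) - z‖ := by
  obtain ⟨z, φ, hφ, hz⟩ := CompactSpace.tendsto_subseq (fun n => (a n : ℤ_[p]))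
  refine ⟨z, fun x => tendsto_nhds_unique (l := atTop) (f := fun n => ‖f x - f (a (φ n))‖) ?_ ?_⟩
  · simpa using ((ha.comp hφ.tendsto_atTop).const_sub (f x)).norm
  · have hz' : Tendsto (fun n => ((a (φ n) : ℤ) : ℚ_[p])) atTop (𝓝 z) :=
      ((continuous_subtype_val.tendsto z).comp hz).congr fun n => PadicInt.coe_intCast _
    simpa [hf] using (hz'.const_sub (x : ℚ_[p])).norm.const_mul C

lemma tendsto_two_zpow_neg_add (c : ℤ) :
    Tendsto (fun n : ℕ => (2 : ℝ) ^ (-((n : ℤ) + c))) atTop (𝓝 0) := by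
  have h := (tendsto_pow_atTop_nhds_zero_of_lt_one (by norm_num : (0 : ℝ) ≤ 2⁻¹)
    (by norm_num)).const_mul ((2 : ℝ) ^ (-c))
  rw [mul_zero] at h
  refine h.congr fun n => ?_
  rw [neg_add, zpow_add₀ two_ne_zero, zpow_neg _ (n : ℤ), zpow_natCast, inv_pow, mul_comm]

theorem exists_zero_of_val_increment (g : ℤ → ℚ_[2]) (c : ℤ)
    (h0 : (c : WithTop ℤ) ≤ nuQ2 (g 0))
    (hd : ∀ (x : ℤ) (d : ℕ), nuQ2 (g (x + 2 ^ d) - g x) = ((d : ℤ) + c : ℤ)) :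
    ∃ z₀ : ℤ_[2], ∀ x : ℤ,
      nuQ2 (g x) = nuQ2 ((x : ℚ_[2]) - (z₀ : ℚ_[2])) + (c : WithTop ℤ) := by
  have hd' (x : ℤ) (d : ℕ) : ‖g (x + 2 ^ d) - g x‖ = (2 : ℝ) ^ (-((d : ℤ) + c)) :=
    norm_eq_zpow_neg_of_nuQ2_eq (hd x d)
  choose a ha using exists_norm_le_of_two_pow_increment hd' (norm_le_zpow_neg_of_le_nuQ2 h0)
  have hlim : Tendsto (fun n => g (a n)) atTop (𝓝 0) :=
    squeeze_zero_norm ha (tendsto_two_zpow_neg_add c)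
  obtain ⟨z, hz⟩ := exists_norm_eq_mul_norm_sub (norm_sub_eq_of_two_pow_increment hd') hlim
  exact ⟨z, fun x => nuQ2_eq_add_of_norm_eq (hz x)⟩
end

section
/- Let $e = \lfloor \log_2(n-1)\rfloor$ and suppose $3\cdot 2^{e-1} < n < 2^{e+1}$, $0 \le p \le \lfloor (n - 3\cdot 2^{e-1})/2 \rfloor$ with $p < \lfloor (n-3\cdot 2^{e-1})/2\rfloor$, $\binom{n-1-p}{p}$ is odd, and $p < 2^h < 2^e$. Then $\binom{n-1-p-2^e+2^h}{p+2^e-2^h}$ is odd if and only if $h = \lfloor \log_2(2^{e+1} - n + p)\rfloor$. -/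
/-! Lucas's theorem in base `2 ^ h` splits the parity of a binomial coefficient into the parities
of the coefficients of the residues and of the quotients mod `2 ^ h`. Put `e = h + j` and
`x = n - 1 - p - 2 ^ e + 2 ^ h`, so that `n - 1 - p = 2 ^ h * (2 ^ j - 1) + x` and
`p + 2 ^ e - 2 ^ h = 2 ^ h * (2 ^ j - 1) + p`. Both coefficients then have the same residue part,
which is odd by hypothesis, and the question reduces to the parity of
`choose (x / 2 ^ h) (2 ^ j - 1)`. As `x / 2 ^ h ≤ 2 ^ j`, this is odd exactly when
`x / 2 ^ h = 2 ^ j - 1`, i.e. when `2 ^ h ≤ 2 ^ (e + 1) - n + p < 2 ^ (h + 1)`. -/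

namespace Choose

open Nat

variable {p : ℕ} [Fact p.Prime]

theorem choose_modEq_choose_mod_pow_mul_choose_div_pow_nat (a n k : ℕ) :
    choose n k ≡ choose (n % p ^ a) (k % p ^ a) * choose (n / p ^ a) (k / p ^ a) [MOD p] := by
  induction a generalizing n k with
  | zero => simp only [pow_zero, Nat.mod_one, Nat.div_one, choose_self, one_mul]; rfl
  | succ a ih =>
    have hdvd : p ^ a ∣ p ^ (a + 1) := pow_dvd_pow p a.le_succ
    have hlow := ih (n % p ^ (a + 1)) (k % p ^ (a + 1))
    rw [Nat.mod_mod_of_dvd n hdvd, Nat.mod_mod_of_dvd k hdvd, pow_succ,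
      Nat.mod_mul_right_div_self, Nat.mod_mul_right_div_self] at hlow
    calc choose n k
        ≡ choose (n % p ^ a) (k % p ^ a) * choose (n / p ^ a) (k / p ^ a) [MOD p] := ih n k
      _ ≡ choose (n % p ^ a) (k % p ^ a) * (choose (n / p ^ a % p) (k / p ^ a % p) *
            choose (n / p ^ a / p) (k / p ^ a / p)) [MOD p] :=
          choose_modEq_choose_mod_mul_choose_div_nat.mul_left _
      _ ≡ choose (n % p ^ (a + 1)) (k % p ^ (a + 1)) * choose (n / p ^ (a + 1)) (k / p ^ (a + 1))
            [MOD p] := by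
          rw [← mul_assoc, Nat.div_div_eq_div_mul, Nat.div_div_eq_div_mul, ← pow_succ]
          exact hlow.symm.mul_right _

end Choose

namespace Nat

theorem odd_choose_iff_mod_two_pow_and_div_two_pow (a n k : ℕ) :
    Odd (choose n k) ↔
      Odd (choose (n % 2 ^ a) (k % 2 ^ a)) ∧ Odd (choose (n / 2 ^ a) (k / 2 ^ a)) := by
  rw [← Nat.odd_mul, Nat.odd_iff, Nat.odd_iff,
    Choose.choose_modEq_choose_mod_pow_mul_choose_div_pow_nat (p := 2) a n k]

theorem odd_choose_two_pow_mul_add_iff {h k : ℕ} (hk : k < 2 ^ h) (n q : ℕ) :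
    Odd (choose n (2 ^ h * q + k)) ↔ Odd (choose (n % 2 ^ h) k) ∧ Odd (choose (n / 2 ^ h) q) := by
  rw [odd_choose_iff_mod_two_pow_and_div_two_pow h, Nat.mul_add_mod, Nat.mod_eq_of_lt hk,
    Nat.mul_add_div (Nat.two_pow_pos h), Nat.div_eq_of_lt hk, add_zero]

theorem odd_choose_iff_eq_of_le_succ {q m : ℕ} (hq : q ≤ m + 1) (hm : Even (m + 1)) :
    Odd (choose q m) ↔ q = m := by
  rcases lt_trichotomy q m with hlt | rfl | hgt
  · simp [choose_eq_zero_of_lt hlt, hlt.ne]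
  · simp
  · obtain rfl : q = m + 1 := by omega
    simp [choose_succ_self_right, Nat.not_odd_iff_even.mpr hm]

end Nat

theorem odd_choose_iff_general (n p h e : ℕ)
    (hn2 : n < 2 ^ (e + 1))
    (hp : p < (n - 3 * 2 ^ (e - 1)) / 2)
    (hodd : Odd (Nat.choose (n - 1 - p) p))
    (hh1 : p < 2 ^ h) (hh2 : 2 ^ h < 2 ^ e) :
    Odd (Nat.choose (n - 1 - p - 2 ^ e + 2 ^ h) (p + 2 ^ e - 2 ^ h)) ↔
      h = Nat.log 2 (2 ^ (e + 1) - n + p) := by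
  obtain ⟨j, rfl⟩ : ∃ j, e = h + j :=
    Nat.exists_eq_add_of_le ((Nat.pow_lt_pow_iff_right one_lt_two).mp hh2).le
  have hj : j ≠ 0 := by rintro rfl; simp at hh2
  have hhalf : 2 ^ (h + j) = 2 * 2 ^ (h + j - 1) := by rw [← pow_succ']; congr 1; omega
  have hsplit : 2 ^ (h + j) = 2 ^ h * (2 ^ j - 1) + 2 ^ h := by
    rw [Nat.mul_sub, mul_one, ← pow_add,
      Nat.sub_add_cancel (Nat.pow_le_pow_right two_pos (by omega))]
  set x := n - 1 - p - 2 ^ (h + j) + 2 ^ h with hx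
  have hk : p + 2 ^ (h + j) - 2 ^ h = 2 ^ h * (2 ^ j - 1) + p := by omega
  have ha : n - 1 - p = 2 ^ h * (2 ^ j - 1) + x := by omega
  have hlow : Odd (Nat.choose (x % 2 ^ h) p) := by
    have := (Nat.odd_choose_two_pow_mul_add_iff hh1 (n - 1 - p) 0).mp (by simpa using hodd)
    simpa [ha] using this.1
  have hq : x / 2 ^ h < 2 ^ j - 1 + 2 := by
    rw [Nat.div_lt_iff_lt_mul (Nat.two_pow_pos h), add_mul, mul_comm]
    omega
  have heven : Even (2 ^ j - 1 + 1) := by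
    rw [Nat.sub_add_cancel Nat.one_le_two_pow, Nat.even_pow]
    exact ⟨even_two, hj⟩
  rw [hk, Nat.odd_choose_two_pow_mul_add_iff hh1, and_iff_right hlow,
    Nat.odd_choose_iff_eq_of_le_succ (by omega) heven, Nat.div_eq_iff (Nat.two_pow_pos h),
    eq_comm, Nat.log_eq_iff (Or.inr ⟨one_lt_two, by omega⟩), mul_comm, pow_succ, pow_succ]
  omega

theorem odd_choose_iff (n p h e : ℕ)
    (hev : e = Nat.log 2 (n - 1))
    (hn1 : 3 * 2 ^ (e - 1) < n) (hn2 : n < 2 ^ (e + 1))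
    (hp : p < (n - 3 * 2 ^ (e - 1)) / 2)
    (hodd : Odd (Nat.choose (n - 1 - p) p))
    (hh1 : p < 2 ^ h) (hh2 : 2 ^ h < 2 ^ e) :
    Odd (Nat.choose (n - 1 - p - 2 ^ e + 2 ^ h) (p + 2 ^ e - 2 ^ h)) ↔
      h = Nat.log 2 (2 ^ (e + 1) - n + p) :=
  odd_choose_iff_general n p h e hn2 hp hodd hh1 hh2
end
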